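/- Let G be a finite rooted DAG with root r. Then for every vertex v of G, the weight of v is at most the multiplicity of v, i.e. wt_G(v) ≤ mul_G(v). -/

import Mathlib

/-- The set of directed paths from `r` to `v` in the digraph with edge relation `E`,
represented as nonempty vertex lists. -/
def pathsFromTo {V : Type} (E : V → V → Prop) (r v : V) : Set (List V) :=
  {p : List V | p.Chain' E ∧ p.head? = some r ∧ p.getLast? = some v}

/-- The weight `wt_G(v)`: the number of directed paths from the root `r` to `v`. -/
noncomputable def pathWt {V : Type} (E : V → V → Prop) (r v : V) : ℕ :=
  Set.ncard (pathsFromTo E r v)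

/-- The in-degree of `w`. -/
noncomputable def degIn {V : Type} (E : V → V → Prop) (w : V) : ℕ :=
  Set.ncard {u | E u w}

/-- The multiplicity `mul_G(v)`: the maximum, over all paths `(v_0, …, v_k)` from the
root `r` to `v`, of the product `∏_{i=1}^k deg⁻(v_i)` (the empty product being `1`). -/
noncomputable def pathMul {V : Type} (E : V → V → Prop) (r v : V) : ℕ :=
  sSup {m | ∃ p ∈ pathsFromTo E r v, m = (p.tail.map (degIn E)).prod}

/-! Induction along the DAG. The root has the single path `[r]`, and a path to `v ≠ r` is a path
to an in-neighbour `u` followed by the edge `u → v`, so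
`wt v ≤ ∑ wt u ≤ ∑ mul u ≤ deg⁻ v · max mul u ≤ mul v`, the last step because a path realising
`mul u` extends to a path to `v` whose product picks up the factor `deg⁻ v`. -/

open Relation

variable {V : Type} {E : V → V → Prop} {r u v : V}

theorem List.IsChain.nodup_of_acyclic (hacyc : ∀ x, ¬ TransGen E x x) {p : List V}
    (hp : p.IsChain E) : p.Nodup := by
  have : Trans (TransGen E) (TransGen E) (TransGen E) := ⟨TransGen.trans⟩
  have hpw : p.Pairwise (TransGen E) :=
    List.isChain_iff_pairwise.mp (hp.imp fun _ _ => TransGen.single)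
  exact hpw.imp fun {a _} h heq => by subst heq; exact hacyc a h

theorem pathsFromTo_finite [Finite V] (hacyc : ∀ x, ¬ TransGen E x x) :
    (pathsFromTo E r v).Finite :=
  (List.finite_length_le V (Nat.card V)).subset fun _ hp =>
    (hp.1.nodup_of_acyclic hacyc).length_le_natCard

theorem append_singleton_mem_pathsFromTo {p : List V} (hp : p ∈ pathsFromTo E r u)
    (he : E u v) : p ++ [v] ∈ pathsFromTo E r v := by
  obtain ⟨hc, hh, hl⟩ := hp
  obtain ⟨q, rfl⟩ := List.getLast?_eq_some_iff.mp hl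
  refine ⟨List.isChain_append.mpr ⟨hc, .singleton v, ?_⟩, ?_, List.getLast?_concat⟩
  · simpa using he
  · cases q <;> simpa using hh

theorem exists_eq_append_of_mem_pathsFromTo (hvr : v ≠ r) {p : List V}
    (hp : p ∈ pathsFromTo E r v) : ∃ u q, E u v ∧ q ∈ pathsFromTo E r u ∧ p = q ++ [v] := by
  obtain ⟨hc, hh, hl⟩ := hp
  obtain ⟨q, rfl⟩ := List.getLast?_eq_some_iff.mp hl
  rcases q.eq_nil_or_concat with rfl | ⟨q, u, rfl⟩
  · simp only [List.nil_append, List.head?_cons, Option.some.injEq] at hh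
    exact absurd hh hvr
  rw [List.concat_eq_append] at hc hh ⊢
  obtain ⟨hcq, -, he⟩ := List.isChain_append.mp hc
  exact ⟨u, q ++ [u], by simpa using he, ⟨hcq, by simpa using hh, by simp⟩, rfl⟩

theorem pathsFromTo_self (hacyc : ∀ x, ¬ TransGen E x x) : pathsFromTo E r r = {[r]} := by
  refine Set.eq_singleton_iff_unique_mem.mpr ⟨⟨.singleton r, rfl, rfl⟩, ?_⟩
  rintro (_ | ⟨a, _ | ⟨b, s⟩⟩) ⟨hc, hh, hl⟩
  · simp at hh
  · simpa using hh
  · simp only [List.head?_cons, Option.some.injEq] at hh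
    rw [List.getLast?_cons_cons, ← hh] at hl
    exact absurd (List.mem_of_getLast? hl) (List.nodup_cons.mp (hc.nodup_of_acyclic hacyc)).1

theorem pathWt_self (hacyc : ∀ x, ¬ TransGen E x x) : pathWt E r r = 1 := by
  rw [pathWt, pathsFromTo_self hacyc, Set.ncard_singleton]

theorem le_pathMul [Finite V] (hacyc : ∀ x, ¬ TransGen E x x) {p : List V}
    (hp : p ∈ pathsFromTo E r v) : (p.tail.map (degIn E)).prod ≤ pathMul E r v := by
  have hbdd : BddAbove {m | ∃ p ∈ pathsFromTo E r v, m = (p.tail.map (degIn E)).prod} :=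
    ((pathsFromTo_finite hacyc).image fun q : List V => (q.tail.map (degIn E)).prod).bddAbove.mono
      (by rintro _ ⟨q, hq, rfl⟩; exact ⟨q, hq, rfl⟩)
  exact le_csSup hbdd ⟨p, hp, rfl⟩

theorem one_le_pathMul_self [Finite V] (hacyc : ∀ x, ¬ TransGen E x x) : 1 ≤ pathMul E r r :=
  le_pathMul (p := [r]) hacyc ⟨.singleton r, rfl, rfl⟩

theorem pathMul_mul_degIn_le [Finite V] (hacyc : ∀ x, ¬ TransGen E x x) (he : E u v) :
    pathMul E r u * degIn E v ≤ pathMul E r v := by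
  rcases (pathsFromTo E r u).eq_empty_or_nonempty with hempty | ⟨p₀, hp₀⟩
  · -- `pathMul E r u = sSup ∅ = 0`
    simp [pathMul, hempty]
  obtain ⟨p, hp, hpu⟩ : pathMul E r u ∈
      {m | ∃ p ∈ pathsFromTo E r u, m = (p.tail.map (degIn E)).prod} := by
    refine Nat.sSup_mem ⟨_, p₀, hp₀, rfl⟩ ⟨pathMul E r u, ?_⟩
    rintro _ ⟨q, hq, rfl⟩
    exact le_pathMul hacyc hq
  have hpne : p ≠ [] := by rintro rfl; simp [pathsFromTo] at hp
  calc pathMul E r u * degIn E v = ((p ++ [v]).tail.map (degIn E)).prod := by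
        simp [List.tail_append_of_ne_nil hpne, hpu]
    _ ≤ pathMul E r v := le_pathMul hacyc (append_singleton_mem_pathsFromTo hp he)

theorem pathWt_le_sum_pathWt [Finite V] (hacyc : ∀ x, ¬ TransGen E x x) (hvr : v ≠ r)
    {N : Finset V} (hN : ∀ u, E u v → u ∈ N) : pathWt E r v ≤ ∑ u ∈ N, pathWt E r u := by
  have hsub : pathsFromTo E r v ⊆ ⋃ u ∈ N, (· ++ [v]) '' pathsFromTo E r u := by
    intro p hp
    obtain ⟨u, q, he, hq, rfl⟩ := exists_eq_append_of_mem_pathsFromTo hvr hp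
    exact Set.mem_biUnion (hN u he) ⟨q, hq, rfl⟩
  calc pathWt E r v ≤ (⋃ u ∈ N, (· ++ [v]) '' pathsFromTo E r u).ncard :=
        Set.ncard_le_ncard hsub (N.finite_toSet.biUnion fun _ _ =>
          (pathsFromTo_finite hacyc).image _)
    _ ≤ ∑ u ∈ N, ((· ++ [v]) '' pathsFromTo E r u).ncard := N.set_ncard_biUnion_le _
    _ ≤ ∑ u ∈ N, pathWt E r u :=
        Finset.sum_le_sum fun _ _ => Set.ncard_image_le (pathsFromTo_finite hacyc)

theorem sum_pathMul_le_pathMul [Finite V] (hacyc : ∀ x, ¬ TransGen E x x) {N : Finset V}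
    (hN : ∀ u ∈ N, E u v) : ∑ u ∈ N, pathMul E r u ≤ pathMul E r v := by
  rcases N.eq_empty_or_nonempty with rfl | hne
  · simp
  obtain ⟨u₀, hu₀, hmax⟩ := N.exists_max_image (pathMul E r) hne
  have hcard : N.card ≤ degIn E v := by
    rw [degIn, ← Set.ncard_coe_finset]
    exact Set.ncard_le_ncard (fun u hu => hN u hu) (Set.toFinite _)
  calc ∑ u ∈ N, pathMul E r u ≤ N.card • pathMul E r u₀ := Finset.sum_le_card_nsmul _ _ _ hmax
    _ ≤ pathMul E r u₀ * degIn E v := by rw [smul_eq_mul, mul_comm]; gcongr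
    _ ≤ pathMul E r v := pathMul_mul_degIn_le hacyc (hN u₀ hu₀)

theorem stmt0_general {V : Type} [Fintype V] (E : V → V → Prop) (r : V)
    (hacyc : ∀ x : V, ¬ Relation.TransGen E x x)
    (v : V) : pathWt E r v ≤ pathMul E r v := by
  have : IsTrans V (TransGen E) := ⟨fun _ _ _ => TransGen.trans⟩
  have : Std.Irrefl (TransGen E) := ⟨hacyc⟩
  induction v using (Finite.wellFounded_of_trans_of_irrefl (TransGen E)).induction with
  | _ v ih =>
  by_cases hvr : v = r
  · subst hvr
    exact (pathWt_self hacyc).trans_le (one_le_pathMul_self hacyc)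
  let N := (Set.toFinite {u | E u v}).toFinset
  calc pathWt E r v ≤ ∑ u ∈ N, pathWt E r u := pathWt_le_sum_pathWt hacyc hvr (by simp [N])
    _ ≤ ∑ u ∈ N, pathMul E r u :=
        Finset.sum_le_sum fun u hu => ih u (.single (by simpa [N] using hu))
    _ ≤ pathMul E r v := sum_pathMul_le_pathMul hacyc (by simp [N])

/-- In a finite rooted DAG `G` with root `r`, for every vertex `v` of `G`,
`wt_G(v) ≤ mul_G(v)`. -/
theorem stmt0 {V : Type} [Fintype V] (E : V → V → Prop) (r : V)
    (hacyc : ∀ x : V, ¬ Relation.TransGen E x x)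
    (hroot : ∀ x : V, Relation.ReflTransGen E r x)
    (v : V) : pathWt E r v ≤ pathMul E r v :=
  stmt0_general E r hacyc v
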